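/- Under the same coupled system V = g(c)H with g = G − G'·Id and ∂°c = Δ_Γ G'(c) + cHV on an evolving closed hypersurface, the energy E(t) = ∫_{Γ(t)} G(c) dA satisfies dE/dt = −∫_{Γ(t)} (|∇_Γ G'(c)|² + V²) dA ≤ 0. -/
import Mathlib


/-- Energy dissipation for the coupled system: with V = g(c)H,
g = G − G'·Id, and ∂°c = Δ_Γ G'(c) + cHV, the energy E(t) = ∫_{Γ(t)} G(c) dA satisfies
dE/dt = −∫_{Γ(t)} (|∇_Γ G'(c)|² + V²) dA ≤ 0, assuming the transport theorem (combined
with the chain rule ∂°(G(c)) = G'(c)∂°c) and integration by parts. -/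
theorem stmt_12 {M : Type*}
    (Intg : ℝ → (M → ℝ) → ℝ)  -- ∫_{Γ(t)} · dA, in the pullback to M
    (c H V Dc Lap NG : ℝ → M → ℝ)  -- Dc = ∂°c, Lap = Δ_Γ G'(c), NG = |∇_Γ G'(c)|²
    (G : ℝ → ℝ) (hG : ContDiff ℝ 2 G)
    (hadd : ∀ t (f g : M → ℝ), Intg t (fun p => f p + g p) = Intg t f + Intg t g)
    (hzero : ∀ t, Intg t (fun _ => 0) = 0)
    (hmono : ∀ t (f : M → ℝ), (∀ p, 0 ≤ f p) → 0 ≤ Intg t f)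
    (hNG : ∀ t p, 0 ≤ NG t p)
    (hV : ∀ t p, V t p = (G (c t p) - deriv G (c t p) * c t p) * H t p)
    (hDc : ∀ t p, Dc t p = Lap t p + c t p * H t p * V t p)
    (transport : ∀ t, HasDerivAt (fun s => Intg s (fun p => G (c s p)))
        (Intg t (fun p => deriv G (c t p) * Dc t p - G (c t p) * H t p * V t p)) t)
    (parts : ∀ t, Intg t (fun p => deriv G (c t p) * Lap t p) = - Intg t (NG t)) :
    ∀ t, HasDerivAt (fun s => Intg s (fun p => G (c s p)))
        (- Intg t (fun p => NG t p + (V t p) ^ 2)) t ∧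
      - Intg t (fun p => NG t p + (V t p) ^ 2) ≤ 0 := by
  intro t
  have hneg : ∀ (f : M → ℝ), Intg t (fun p => -f p) = - Intg t f := by
    intro f
    have h := hadd t f (fun p => -f p)
    simp only [add_neg_cancel, hzero t] at h
    linarith
  have key : Intg t (fun p => deriv G (c t p) * Dc t p - G (c t p) * H t p * V t p)
      = - Intg t (fun p => NG t p + (V t p) ^ 2) := by
    have heq : (fun p => deriv G (c t p) * Dc t p - G (c t p) * H t p * V t p)
        = fun p => deriv G (c t p) * Lap t p + -((V t p) ^ 2) := by
      funext p
      rw [hDc t p, hV t p]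
      ring
    rw [heq, hadd t _ _, parts t, hneg (fun p => (V t p) ^ 2),
      hadd t (NG t) (fun p => (V t p) ^ 2)]
    ring
  refine ⟨key ▸ transport t, ?_⟩
  have := hmono t (fun p => NG t p + (V t p) ^ 2)
    (fun p => add_nonneg (hNG t p) (sq_nonneg _))
  linarith
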